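/- Let ρ be a quantum state on ℂ^d (positive semidefinite with trace 1) and let Π₁, …, Π_N be orthogonal projections on ℂ^d. Then ‖ ρ − √(Π₁ ⋯ Π_N ⋯ Π₁) ρ √(Π₁ ⋯ Π_N ⋯ Π₁) ‖₁ ≤ 2√2 · ( Σ_{i=1}^{N} Tr{(I − Π_i) ρ} )^{1/4}, where √(Π₁ ⋯ Π_N ⋯ Π₁) is the positive semidefinite square root of Π₁ Π₂ ⋯ Π_N ⋯ Π₂ Π₁. -/

import Mathlib

/-!
Write `M = Π_N ⋯ Π₁` and `S = √(M†M)`; `M` is a contraction, so `0 ≤ S ≤ 1`.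

Gentle operator lemma: if `0 ≤ S ≤ 1` then `‖ρ - SρS‖₁ ≤ 2 √Tr((1 - S)ρ)`. With `C` the sign of
the Hermitian matrix `ρ - SρS`, `‖ρ - SρS‖₁ = Re Tr(C(1 - S)ρ(1 + S))`, and Cauchy–Schwarz for the
semi-inner product `⟪x, y⟫ = Tr(yρx†)` bounds this by `√Tr((1 - S)²ρ) √Tr((1 + S)²ρ)`, where
`(1 - S)² ≤ 1 - S` and `(1 + S)² ≤ 4`.

Since `S² = M†M` and `S² ≤ S`, `Tr((1 - S)ρ) ≤ 1 - ‖M‖²` in the norm of that inner product, and the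
triangle inequality `1 = ‖1‖ ≤ ‖M‖ + ‖1 - M‖` gives `1 - ‖M‖² ≤ 2‖1 - M‖`. Finally Sen's bound
`(1 - M)†(1 - M) ≤ ∑ᵢ (1 - Πᵢ)` gives `‖1 - M‖² ≤ ∑ᵢ Tr((1 - Πᵢ)ρ)`.
-/

open Matrix ComplexOrder

/-- The positive semidefinite square root, as defined in older Mathlib (since removed). -/
noncomputable def Matrix.PosSemidef.sqrt {n 𝕜 : Type*} [Fintype n] [RCLike 𝕜] [DecidableEq n]
    {A : Matrix n n 𝕜} (hA : A.PosSemidef) : Matrix n n 𝕜 :=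
  (hA.1.eigenvectorUnitary : Matrix n n 𝕜) * diagonal ((↑) ∘ (√·) ∘ hA.1.eigenvalues) *
    (star hA.1.eigenvectorUnitary : Matrix n n 𝕜)

/-- The trace norm `‖A‖₁ = Tr √(A† A)` of a complex matrix. -/
noncomputable def traceNorm {n : Type*} [Fintype n] [DecidableEq n]
    (A : Matrix n n ℂ) : ℝ :=
  (Matrix.posSemidef_conjTranspose_mul_self A).sqrt.trace.re

open scoped MatrixOrder Matrix.Norms.L2Operator

section StarOrderedRing

variable {R : Type*} [Ring R] [StarRing R] [PartialOrder R] [StarOrderedRing R]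

theorem star_list_prod_mul_self_le_one {L : List R} (hL : ∀ p ∈ L, IsStarProjection p) :
    star L.prod * L.prod ≤ 1 := by
  induction L with
  | nil => simp
  | cons p L ih =>
    have hp := hL p List.mem_cons_self
    calc star (p * L.prod) * (p * L.prod) = star L.prod * (star p * p) * L.prod := by
          simp only [star_mul, mul_assoc]
      _ = star L.prod * p * L.prod := by rw [hp.isSelfAdjoint.star_eq, hp.isIdempotentElem.eq]
      _ ≤ star L.prod * 1 * L.prod := star_left_conjugate_le_conjugate hp.le_one _
      _ ≤ 1 := by simpa using ih fun q hq => hL q (List.mem_cons_of_mem p hq)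

/-- Sen's non-commutative union bound, in operator form. -/
theorem star_one_sub_list_prod_mul_le_sum {L : List R} (hL : ∀ p ∈ L, IsStarProjection p) :
    star (1 - L.prod) * (1 - L.prod) ≤ (L.map (1 - ·)).sum := by
  induction L with
  | nil => simp
  | cons p L ih =>
    have hp := hL p List.mem_cons_self
    set T := L.prod
    have hsplit : star (1 - p * T) * (1 - p * T) = (1 - p) + star (1 - T) * p * (1 - T) :=
      calc star (1 - p * T) * (1 - p * T)
          = 1 - p * T - star T * star p + star T * (star p * p) * T := by
            simp only [star_sub, star_one, star_mul]; noncomm_ring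
        _ = (1 - p) + star (1 - T) * p * (1 - T) := by
            rw [hp.isSelfAdjoint.star_eq, hp.isIdempotentElem.eq, star_sub, star_one]
            noncomm_ring
    calc star (1 - (p :: L).prod) * (1 - (p :: L).prod)
        = (1 - p) + star (1 - T) * p * (1 - T) := hsplit
      _ ≤ (1 - p) + star (1 - T) * 1 * (1 - T) := by
          gcongr; exact star_left_conjugate_le_conjugate hp.le_one _
      _ ≤ ((p :: L).map (1 - ·)).sum := by
          simpa using ih fun q hq => hL q (List.mem_cons_of_mem p hq)

end StarOrderedRing

theorem mul_self_le_self_of_nonneg_of_le_one {A : Type*} [CStarAlgebra A] [PartialOrder A]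
    [StarOrderedRing A] {a : A} (h0 : 0 ≤ a) (h1 : a ≤ 1) : a * a ≤ a := by
  have := Commute.mul_nonneg h0 (sub_nonneg.2 h1) ((Commute.one_right a).sub_right (.refl a))
  rwa [mul_sub, mul_one, sub_nonneg] at this

theorem one_add_mul_one_add_le_four {A : Type*} [CStarAlgebra A] [PartialOrder A]
    [StarOrderedRing A] {a : A} (h0 : 0 ≤ a) (h1 : a ≤ 1) : (1 + a) * (1 + a) ≤ 4 :=
  calc (1 + a) * (1 + a) = 1 + a + a + a * a := by noncomm_ring
    _ ≤ 1 + 1 + 1 + 1 := by gcongr; exact (mul_self_le_self_of_nonneg_of_le_one h0 h1).trans h1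
    _ = 4 := by norm_num

theorem CFC.sqrt_le_one_of_le_one {A : Type*} [CStarAlgebra A] [PartialOrder A]
    [StarOrderedRing A] {a : A} (h : a ≤ 1) : CFC.sqrt a ≤ 1 :=
  (CFC.sqrt_le_sqrt _ _ h).trans_eq CFC.sqrt_one

namespace Matrix

variable {n : Type*} [Fintype n]

theorem PosSemidef.sqrt_eq_cfcSqrt [DecidableEq n] {A : Matrix n n ℂ} (hA : A.PosSemidef) :
    hA.sqrt = CFC.sqrt A := by
  rw [CFC.sqrt_eq_real_sqrt A hA.nonneg, cfcₙ_eq_cfc, hA.1.cfc_eq]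
  simp [PosSemidef.sqrt, IsHermitian.cfc, Unitary.conjStarAlgAut_apply, Function.comp_def]

theorem re_trace_mul_nonneg [DecidableEq n] {A ρ : Matrix n n ℂ} (hA : 0 ≤ A) (hρ : 0 ≤ ρ) :
    0 ≤ (A * ρ).trace.re := by
  have hconj : 0 ≤ CFC.sqrt ρ * A * CFC.sqrt ρ :=
    conjugate_nonneg_of_nonneg hA (CFC.sqrt_nonneg ρ)
  have htrace : (A * ρ).trace = (CFC.sqrt ρ * A * CFC.sqrt ρ).trace := by
    conv_lhs => rw [← CFC.sqrt_mul_sqrt_self ρ hρ]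
    rw [← mul_assoc, trace_mul_cycle]
  rw [htrace]
  exact (Complex.le_def.1 (nonneg_iff_posSemidef.1 hconj).trace_nonneg).1

theorem re_trace_mul_le_of_le [DecidableEq n] {A B ρ : Matrix n n ℂ} (hAB : A ≤ B) (hρ : 0 ≤ ρ) :
    (A * ρ).trace.re ≤ (B * ρ).trace.re := by
  have := re_trace_mul_nonneg (sub_nonneg.2 hAB) hρ
  rw [sub_mul, trace_sub, Complex.sub_re] at this
  linarith

theorem re_trace_mul_mul_conjTranspose_le [DecidableEq n] {x D ρ : Matrix n n ℂ}
    (h : xᴴ * x ≤ D) (hρ : 0 ≤ ρ) : (x * ρ * xᴴ).trace.re ≤ (D * ρ).trace.re := by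
  rw [trace_mul_cycle]
  exact re_trace_mul_le_of_le h hρ

theorem PosSemidef.norm_trace_mul_mul_conjTranspose_le {ρ : Matrix n n ℂ} (hρ : ρ.PosSemidef)
    (x y : Matrix n n ℂ) :
    ‖(y * ρ * xᴴ).trace‖ ≤ √(x * ρ * xᴴ).trace.re * √(y * ρ * yᴴ).trace.re :=
  let := ρ.toMatrixSeminormedAddCommGroup hρ
  let := ρ.toMatrixInnerProductSpace hρ
  norm_inner_le_norm (𝕜 := ℂ) x y

theorem PosSemidef.sqrt_re_trace_mul_mul_conjTranspose_le {ρ : Matrix n n ℂ} (hρ : ρ.PosSemidef)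
    (x y : Matrix n n ℂ) :
    √(x * ρ * xᴴ).trace.re ≤ √(y * ρ * yᴴ).trace.re + √((x - y) * ρ * (x - y)ᴴ).trace.re :=
  let := ρ.toMatrixSeminormedAddCommGroup hρ
  let := ρ.toMatrixInnerProductSpace hρ
  norm_le_norm_add_norm_sub' x y

theorem re_trace_mul_conjTranspose {C : Matrix n n ℂ} (hC : IsSelfAdjoint C) (B : Matrix n n ℂ) :
    (C * Bᴴ).trace.re = (C * B).trace.re := by
  have h : C * Bᴴ = (B * C)ᴴ := by rw [conjTranspose_mul, (isHermitian_iff_isSelfAdjoint.2 hC).eq]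
  rw [h, trace_conjTranspose, trace_mul_comm, RCLike.star_def, Complex.conj_re]

/-- `ρ - SρS` is the Hermitian part of `(1 - S)ρ(1 + S)`. -/
theorem re_trace_mul_sub_mul_mul_eq [DecidableEq n] {ρ S C : Matrix n n ℂ} (hρ : ρ.IsHermitian)
    (hS : S.IsHermitian) (hC : IsSelfAdjoint C) :
    (C * (ρ - S * ρ * S)).trace.re = (C * ((1 - S) * ρ * (1 + S))).trace.re := by
  have hsplit : (1 - S) * ρ * (1 + S) + ((1 - S) * ρ * (1 + S))ᴴ
      = (ρ - S * ρ * S) + (ρ - S * ρ * S) := by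
    simp only [conjTranspose_mul, conjTranspose_add, conjTranspose_sub, conjTranspose_one, hρ.eq,
      hS.eq]
    noncomm_ring
  have := congrArg (fun B => (C * B).trace.re) hsplit
  simp only [mul_add C, trace_add, Complex.add_re, re_trace_mul_conjTranspose hC] at this
  linarith

end Matrix

theorem traceNorm_eq_re_trace_abs {n : Type*} [Fintype n] [DecidableEq n] (X : Matrix n n ℂ) :
    traceNorm X = (CFC.abs X).trace.re := by
  rw [traceNorm, PosSemidef.sqrt_eq_cfcSqrt]
  rfl

theorem Matrix.IsHermitian.exists_traceNorm_eq {n : Type*} [Fintype n] [DecidableEq n]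
    {X : Matrix n n ℂ} (hX : X.IsHermitian) :
    ∃ C : Matrix n n ℂ, IsSelfAdjoint C ∧ C * C = 1 ∧ traceNorm X = (C * X).trace.re := by
  let sgn : ℝ → ℝ := fun x => if x < 0 then -1 else 1
  -- `hsgn` and `hX'` discharge the side conditions of the `cfc` lemmas below
  have hsgn : ContinuousOn sgn (spectrum ℝ X) := X.finite_real_spectrum.continuousOn _
  have hX' : IsSelfAdjoint X := hX.isSelfAdjoint
  refine ⟨cfc sgn X, cfc_predicate _ _, ?_, ?_⟩
  · rw [← cfc_mul sgn sgn X, ← cfc_one ℝ X]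
    congr 1; funext x; dsimp only [sgn]; split_ifs <;> norm_num
  · have hmul : cfc (fun x => sgn x * id x) X = cfc sgn X * X := by
      rw [cfc_mul sgn id X, cfc_id ℝ X]
    rw [traceNorm_eq_re_trace_abs, CFC.abs_eq_cfc_norm X, ← hmul]
    congr 4; funext x; dsimp only [sgn, id]; split_ifs with h
    · simp [abs_of_neg h]
    · simp [abs_of_nonneg (not_lt.1 h)]

/-- The gentle operator lemma. -/
theorem traceNorm_sub_mul_mul_le {n : Type*} [Fintype n] [DecidableEq n] {ρ S : Matrix n n ℂ}
    (hρ : ρ.PosSemidef) (hρ1 : ρ.trace = 1) (hS0 : 0 ≤ S) (hS1 : S ≤ 1) :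
    traceNorm (ρ - S * ρ * S) ≤ 2 * √(((1 - S) * ρ).trace.re) := by
  have hS : S.IsHermitian := (nonneg_iff_posSemidef.1 hS0).1
  have hX : (ρ - S * ρ * S).IsHermitian := by
    simp only [IsHermitian, conjTranspose_sub, conjTranspose_mul, hS.eq, hρ.1.eq, mul_assoc]
  obtain ⟨C, hC, hCC, hnorm⟩ := hX.exists_traceNorm_eq
  have hCh : Cᴴ = C := (isHermitian_iff_isSelfAdjoint.2 hC).eq
  set T₁ := 1 - S
  set T₂ := 1 + S
  have hT₂h : T₂ᴴ = T₂ := by simp only [T₂, conjTranspose_add, conjTranspose_one, hS.eq]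
  have hT₁ : T₁ᴴ * T₁ ≤ T₁ := by
    rw [(nonneg_iff_posSemidef.1 (sub_nonneg.2 hS1)).1.eq]
    exact mul_self_le_self_of_nonneg_of_le_one (sub_nonneg.2 hS1) (sub_le_self _ hS0)
  have hCT₁ : (C * T₁) * ρ * (C * T₁)ᴴ = C * (T₁ * ρ * T₁ᴴ) * C := by
    rw [conjTranspose_mul, hCh]; noncomm_ring
  have hT₂ : T₂ᴴ * T₂ ≤ 4 := by rw [hT₂h]; exact one_add_mul_one_add_le_four hS0 hS1
  have hgram₁ : ((C * T₁) * ρ * (C * T₁)ᴴ).trace.re ≤ (T₁ * ρ).trace.re := by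
    rw [hCT₁, trace_mul_cycle, ← mul_assoc, hCC, one_mul]
    exact re_trace_mul_mul_conjTranspose_le hT₁ hρ.nonneg
  have hgram₂ : (T₂ * ρ * T₂ᴴ).trace.re ≤ 4 := by
    have h4 : ((4 : Matrix n n ℂ) * ρ).trace.re = 4 := by
      rw [← Nat.cast_ofNat, ← nsmul_eq_mul, trace_smul, hρ1]; norm_num
    exact h4 ▸ re_trace_mul_mul_conjTranspose_le hT₂ hρ.nonneg
  calc traceNorm (ρ - S * ρ * S) = (C * (T₁ * ρ * T₂)).trace.re :=
        hnorm.trans (re_trace_mul_sub_mul_mul_eq hρ.1 hS hC)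
    _ ≤ ‖((C * T₁) * ρ * T₂ᴴ).trace‖ := by
      rw [hT₂h, ← mul_assoc, ← mul_assoc]; exact Complex.re_le_norm _
    _ ≤ √(T₂ * ρ * T₂ᴴ).trace.re * √((C * T₁) * ρ * (C * T₁)ᴴ).trace.re :=
      hρ.norm_trace_mul_mul_conjTranspose_le _ _
    _ ≤ √4 * √(T₁ * ρ).trace.re :=
      mul_le_mul (Real.sqrt_le_sqrt hgram₂) (Real.sqrt_le_sqrt hgram₁) (Real.sqrt_nonneg _)
        (Real.sqrt_nonneg _)
    _ = 2 * √(T₁ * ρ).trace.re := by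
      rw [show (4 : ℝ) = 2 ^ 2 by norm_num, Real.sqrt_sq zero_le_two]

theorem one_sub_re_trace_mul_mul_conjTranspose_le {n : Type*} [Fintype n] [DecidableEq n]
    {ρ : Matrix n n ℂ} (hρ : ρ.PosSemidef) (hρ1 : ρ.trace = 1) (M : Matrix n n ℂ) :
    1 - (M * ρ * Mᴴ).trace.re ≤ 2 * √((1 - M) * ρ * (1 - M)ᴴ).trace.re := by
  have htri := hρ.sqrt_re_trace_mul_mul_conjTranspose_le 1 M
  simp only [one_mul, conjTranspose_one, mul_one, hρ1, Complex.one_re, Real.sqrt_one] at htri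
  have ht : 0 ≤ (M * ρ * Mᴴ).trace.re :=
    (Complex.le_def.1 (hρ.mul_mul_conjTranspose_same M).trace_nonneg).1
  nlinarith [Real.sq_sqrt ht, sq_nonneg (√(M * ρ * Mᴴ).trace.re - 1)]

theorem re_trace_one_sub_sqrt_mul_le {n : Type*} [Fintype n] [DecidableEq n]
    {ρ M : Matrix n n ℂ} (hρ : ρ.PosSemidef) (hρ1 : ρ.trace = 1) (hM : Mᴴ * M ≤ 1) :
    ((1 - CFC.sqrt (Mᴴ * M)) * ρ).trace.re ≤ 1 - (M * ρ * Mᴴ).trace.re := by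
  have hSS : CFC.sqrt (Mᴴ * M) * CFC.sqrt (Mᴴ * M) ≤ CFC.sqrt (Mᴴ * M) :=
    mul_self_le_self_of_nonneg_of_le_one (CFC.sqrt_nonneg _) (CFC.sqrt_le_one_of_le_one hM)
  have := re_trace_mul_le_of_le hSS hρ.nonneg
  rw [CFC.sqrt_mul_sqrt_self _ (posSemidef_conjTranspose_mul_self M).nonneg] at this
  rw [sub_mul, one_mul, trace_sub, Complex.sub_re, hρ1, Complex.one_re, trace_mul_cycle]
  linarith

theorem Real.sqrt_two_mul_sqrt {x : ℝ} (hx : 0 ≤ x) : √(2 * √x) = √2 * x ^ ((1 : ℝ) / 4) := by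
  rw [Real.sqrt_mul zero_le_two, Real.sqrt_eq_rpow √x, Real.sqrt_eq_rpow x, ← Real.rpow_mul hx]
  norm_num

/-- **Gentle sequential measurement via the polar decomposition.**
For a quantum state `ρ` and orthogonal projections `Π₁, …, Π_N` on `ℂ^d`,
`‖ρ − √(Π₁ ⋯ Π_N ⋯ Π₁) ρ √(Π₁ ⋯ Π_N ⋯ Π₁)‖₁ ≤ 2 √2 (∑ᵢ Tr ((I − Πᵢ) ρ))^{1/4}`,
where `√(Π₁ ⋯ Π_N ⋯ Π₁)` is the positive semidefinite square root of
`Π₁ ⋯ Π_N ⋯ Π₁ = (Π_N ⋯ Π₁)† (Π_N ⋯ Π₁)`. -/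
theorem gentle_sequential_polar {d N : ℕ}
    (ρ : Matrix (Fin d) (Fin d) ℂ) (hρ : ρ.PosSemidef) (hρtr : ρ.trace = 1)
    (P : Fin N → Matrix (Fin d) (Fin d) ℂ)
    (hherm : ∀ i, (P i).IsHermitian) (hproj : ∀ i, P i * P i = P i) :
    traceNorm (ρ
        - (Matrix.posSemidef_conjTranspose_mul_self ((List.ofFn P).reverse.prod)).sqrt * ρ *
            (Matrix.posSemidef_conjTranspose_mul_self ((List.ofFn P).reverse.prod)).sqrt)
      ≤ 2 * Real.sqrt 2 *
          (∑ i, (((1 : Matrix (Fin d) (Fin d) ℂ) - P i) * ρ).trace.re) ^ ((1 : ℝ) / 4) := by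
  have hP : ∀ i, IsStarProjection (P i) := fun i => ⟨hproj i, (hherm i).isSelfAdjoint⟩
  have hL : ∀ p ∈ (List.ofFn P).reverse, IsStarProjection p := by
    simp only [List.mem_reverse, List.mem_ofFn]
    rintro _ ⟨i, rfl⟩
    exact hP i
  set M := (List.ofFn P).reverse.prod
  have hM : Mᴴ * M ≤ 1 := star_list_prod_mul_self_le_one hL
  set ε := ∑ i, ((1 - P i) * ρ).trace.re
  have hε : 0 ≤ ε := Finset.sum_nonneg fun i _ => re_trace_mul_nonneg (hP i).one_sub_nonneg hρ.nonneg
  have hsen : ((1 - M) * ρ * (1 - M)ᴴ).trace.re ≤ ε := by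
    have := re_trace_mul_mul_conjTranspose_le (star_one_sub_list_prod_mul_le_sum hL) hρ.nonneg
    simpa only [List.map_reverse, List.sum_reverse, List.map_ofFn, List.sum_ofFn,
      Function.comp_apply, Finset.sum_mul, trace_sum, Complex.re_sum] using this
  rw [PosSemidef.sqrt_eq_cfcSqrt]
  calc _ ≤ 2 * √((1 - CFC.sqrt (Mᴴ * M)) * ρ).trace.re :=
        traceNorm_sub_mul_mul_le hρ hρtr (CFC.sqrt_nonneg _) (CFC.sqrt_le_one_of_le_one hM)
    _ ≤ 2 * √(2 * √ε) := by
        gcongr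
        exact (re_trace_one_sub_sqrt_mul_le hρ hρtr hM).trans
          ((one_sub_re_trace_mul_mul_conjTranspose_le hρ hρtr M).trans (by gcongr))
    _ = 2 * √2 * ε ^ ((1 : ℝ) / 4) := by rw [Real.sqrt_two_mul_sqrt hε, mul_assoc]
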